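/- arXiv:2312.08452 — 2 statements merged into one kernel-verified Lean document; each statement's English description precedes it below -/
import Mathlib

section
/- In a group where α₁ and α₂ commute, δ₁, δ₂ are central (commute with α₁, α₂, β), and the chain relations α₁βα₁ = βα₁β and α₂βα₂ = βα₂β hold (as in the mapping class group of the two-holed torus), if δ₁δ₂ = (α₁α₂β)^4 then δ₁δ₂ = α₁^8 · α₂^{β⁻¹α₁^5} · β^{α₁^4} · α₂^{β⁻¹α₁} · β. -/
set_option maxHeartbeats 2000000 in
/-- In a group where α₁ and α₂ commute, δ₁, δ₂ commute with α₁, α₂, β, and the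
braid relations α₁βα₁ = βα₁β and α₂βα₂ = βα₂β hold: if δ₁δ₂ = (α₁α₂β)^4 then
δ₁δ₂ = α₁^8 · α₂^{β⁻¹α₁^5} · β^{α₁^4} · α₂^{β⁻¹α₁} · β, where x^y = y⁻¹xy. -/
theorem stmt3 (G : Type*) [Group G] (α₁ α₂ β δ₁ δ₂ : G)
    (hcomm : α₁ * α₂ = α₂ * α₁)
    (hδ₁α₁ : δ₁ * α₁ = α₁ * δ₁) (hδ₁α₂ : δ₁ * α₂ = α₂ * δ₁) (hδ₁β : δ₁ * β = β * δ₁)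
    (hδ₂α₁ : δ₂ * α₁ = α₁ * δ₂) (hδ₂α₂ : δ₂ * α₂ = α₂ * δ₂) (hδ₂β : δ₂ * β = β * δ₂)
    (hbr₁ : α₁ * β * α₁ = β * α₁ * β) (hbr₂ : α₂ * β * α₂ = β * α₂ * β)
    (h : δ₁ * δ₂ = (α₁ * α₂ * β) ^ 4) :
    δ₁ * δ₂ =
      α₁ ^ 8 * ((β⁻¹ * α₁ ^ 5)⁻¹ * α₂ * (β⁻¹ * α₁ ^ 5)) *
        ((α₁ ^ 4)⁻¹ * β * α₁ ^ 4) * ((β⁻¹ * α₁)⁻¹ * α₂ * (β⁻¹ * α₁)) * β := by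
  -- derived conjugation lemmas
  have h1 : β⁻¹ * α₂ * β = α₂ * β * α₂⁻¹ := by
    calc β⁻¹ * α₂ * β = β⁻¹ * (α₂ * β * α₂) * α₂⁻¹ := by group
    _ = β⁻¹ * (β * α₂ * β) * α₂⁻¹ := by rw [hbr₂]
    _ = α₂ * β * α₂⁻¹ := by group
  have h1' : β * α₂ * β⁻¹ = α₂⁻¹ * β * α₂ := by
    have : α₂⁻¹ * β * α₂ = β * α₂ * β⁻¹ := by
      calc α₂⁻¹ * β * α₂ = α₂⁻¹ * (β * α₂ * β) * β⁻¹ := by group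
      _ = α₂⁻¹ * (α₂ * β * α₂) * β⁻¹ := by rw [← hbr₂]
      _ = β * α₂ * β⁻¹ := by group
    exact this.symm
  have hcomm' : α₂ * α₁⁻¹ = α₁⁻¹ * α₂ := by
    calc α₂ * α₁⁻¹ = α₁⁻¹ * (α₁ * α₂) * α₁⁻¹ := by group
    _ = α₁⁻¹ * (α₂ * α₁) * α₁⁻¹ := by rw [hcomm]
    _ = α₁⁻¹ * α₂ := by group
  -- K = β α₁² β commutes with α₁
  have hK : (β * α₁ * α₁ * β) * α₁ = α₁ * (β * α₁ * α₁ * β) := by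
    calc (β * α₁ * α₁ * β) * α₁ = β * α₁ * (α₁ * β * α₁) := by group
    _ = β * α₁ * (β * α₁ * β) := by rw [hbr₁]
    _ = (β * α₁ * β) * (α₁ * β) := by group
    _ = (α₁ * β * α₁) * (α₁ * β) := by rw [← hbr₁]
    _ = α₁ * (β * α₁ * α₁ * β) := by group
  -- L = β α₁ α₂ β swaps α₁ and α₂ by conjugation
  have hLy : (β * α₁ * α₂ * β) * α₂ = α₁ * (β * α₁ * α₂ * β) := by
    calc (β * α₁ * α₂ * β) * α₂ = β * α₁ * (α₂ * β * α₂) := by group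
    _ = β * α₁ * (β * α₂ * β) := by rw [hbr₂]
    _ = (β * α₁ * β) * (α₂ * β) := by group
    _ = (α₁ * β * α₁) * (α₂ * β) := by rw [← hbr₁]
    _ = α₁ * (β * α₁ * α₂ * β) := by group
  have hLx : (β * α₁ * α₂ * β) * α₁ = α₂ * (β * α₁ * α₂ * β) := by
    calc (β * α₁ * α₂ * β) * α₁ = β * (α₁ * α₂) * (β * α₁) := by group
    _ = β * (α₂ * α₁) * (β * α₁) := by rw [hcomm]
    _ = β * α₂ * (α₁ * β * α₁) := by group
    _ = β * α₂ * (β * α₁ * β) := by rw [hbr₁]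
    _ = (β * α₂ * β) * (α₁ * β) := by group
    _ = (α₂ * β * α₂) * (α₁ * β) := by rw [← hbr₂]
    _ = α₂ * β * (α₂ * α₁) * β := by group
    _ = α₂ * β * (α₁ * α₂) * β := by rw [← hcomm]
    _ = α₂ * (β * α₁ * α₂ * β) := by group
  have hLyinv : (β * α₁ * α₂ * β) * α₂⁻¹ = α₁⁻¹ * (β * α₁ * α₂ * β) := by
    calc (β * α₁ * α₂ * β) * α₂⁻¹
        = α₁⁻¹ * (α₁ * (β * α₁ * α₂ * β)) * α₂⁻¹ := by group
    _ = α₁⁻¹ * ((β * α₁ * α₂ * β) * α₂) * α₂⁻¹ := by rw [hLy]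
    _ = α₁⁻¹ * (β * α₁ * α₂ * β) := by group
  -- hA : (α₁ α₂ β)^4 = α₁² α₂ (K α₂ K)
  have hA : (α₁ * α₂ * β) ^ 4
      = α₁ * α₁ * α₂ * ((β * α₁ * α₁ * β) * α₂ * (β * α₁ * α₁ * β)) := by
    calc (α₁ * α₂ * β) ^ 4
        = (α₁*α₂*β)*(α₁*α₂*β)*(α₁*α₂*β)*(α₁*α₂*β) := by
          rw [pow_succ, pow_succ, pow_succ, pow_one]
    _ = α₁*α₂*(β*α₁*β)*(β⁻¹*α₂*β)*(α₁*α₂*(β*α₁*β)*(β⁻¹*α₂*β)) := by group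
    _ = α₁*α₂*(α₁*β*α₁)*(β⁻¹*α₂*β)*(α₁*α₂*(α₁*β*α₁)*(β⁻¹*α₂*β)) := by rw [← hbr₁]
    _ = α₁*α₂*(α₁*β*α₁)*(α₂*β*α₂⁻¹)*(α₁*α₂*(α₁*β*α₁)*(α₂*β*α₂⁻¹)) := by rw [h1]
    _ = α₁*(α₂*α₁)*(β*α₁)*(α₂*β)*(α₂⁻¹*(α₁*α₂))*(α₁*(β*α₁))*(α₂*β*α₂⁻¹) := by group
    _ = α₁*(α₂*α₁)*(β*α₁)*(α₂*β)*(α₂⁻¹*(α₂*α₁))*(α₁*(β*α₁))*(α₂*β*α₂⁻¹) := by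
          rw [hcomm]
    _ = α₁*(α₂*α₁)*(β*α₁)*α₂*((β*α₁*α₁*β)*α₁)*(α₂*β*α₂⁻¹) := by group
    _ = α₁*(α₂*α₁)*(β*α₁)*α₂*(α₁*(β*α₁*α₁*β))*(α₂*β*α₂⁻¹) := by rw [hK]
    _ = α₁*(α₂*α₁)*(β*α₁)*α₂*(α₁*(β*α₁*α₁*β))*(β⁻¹*α₂*β) := by rw [← h1]
    _ = α₁*(α₂*α₁)*(β*α₁)*(α₂*α₁)*(β*(α₁*(α₁*(α₂*β)))) := by group
    _ = α₁*(α₁*α₂)*(β*α₁)*(α₁*α₂)*(β*(α₁*(α₁*(α₂*β)))) := by rw [← hcomm]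
    _ = (α₁*α₁*α₂*β)*(α₁*α₁*α₂*β)*(α₁*(α₁*α₂))*β := by group
    _ = (α₁*α₁*α₂*β)*(α₁*α₁*α₂*β)*(α₁*(α₂*α₁))*β := by rw [hcomm]
    _ = (α₁*α₁*α₂*β)*(α₁*α₁*α₂*β)*((α₁*α₂)*α₁)*β := by group
    _ = (α₁*α₁*α₂*β)*(α₁*α₁*α₂*β)*((α₂*α₁)*α₁)*β := by rw [hcomm]
    _ = (α₁*α₁*α₂*β)*(α₁*α₁)*(α₂*β*α₂)*(α₁*α₁)*β := by group
    _ = (α₁*α₁*α₂*β)*(α₁*α₁)*(β*α₂*β)*(α₁*α₁)*β := by rw [hbr₂]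
    _ = α₁ * α₁ * α₂ * ((β * α₁ * α₁ * β) * α₂ * (β * α₁ * α₁ * β)) := by group
  -- hB : K α₂ K = α₂ L L
  have hB : (β * α₁ * α₁ * β) * α₂ * (β * α₁ * α₁ * β)
      = α₂ * ((β * α₁ * α₂ * β) * (β * α₁ * α₂ * β)) := by
    calc (β * α₁ * α₁ * β) * α₂ * (β * α₁ * α₁ * β)
        = β*(α₁*α₁)*(β*α₂*β)*(α₁*α₁)*β := by group
    _ = β*(α₁*α₁)*(α₂*β*α₂)*(α₁*α₁)*β := by rw [← hbr₂]
    _ = β*(α₁*α₁*α₂)*β*(α₂*α₁)*(α₁*β) := by group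
    _ = β*(α₁*α₁*α₂)*β*(α₁*α₂)*(α₁*β) := by rw [← hcomm]
    _ = β*(α₁*α₁*α₂)*β*α₁*(α₂*α₁)*β := by group
    _ = β*(α₁*α₁*α₂)*β*α₁*(α₁*α₂)*β := by rw [← hcomm]
    _ = β*α₁*(α₁*α₂)*β*(α₁*α₁)*(α₂*β) := by group
    _ = β*α₁*(α₂*α₁)*β*(α₁*α₁)*(α₂*β) := by rw [hcomm]
    _ = β*α₁*α₂*(α₁*β*α₁)*α₁*α₂*β := by group
    _ = β*α₁*α₂*(β*α₁*β)*α₁*α₂*β := by rw [hbr₁]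
    _ = ((β*α₁*α₂*β)*α₁)*(β*α₁*α₂*β) := by group
    _ = (α₂*(β*α₁*α₂*β))*(β*α₁*α₂*β) := by rw [hLx]
    _ = α₂ * ((β * α₁ * α₂ * β) * (β * α₁ * α₂ * β)) := by group
  -- hD : the RHS equals α₁² α₂ (α₂ L L)
  have hD : α₁ ^ 8 * ((β⁻¹ * α₁ ^ 5)⁻¹ * α₂ * (β⁻¹ * α₁ ^ 5)) *
        ((α₁ ^ 4)⁻¹ * β * α₁ ^ 4) * ((β⁻¹ * α₁)⁻¹ * α₂ * (β⁻¹ * α₁)) * β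
      = α₁ * α₁ * α₂ * (α₂ * ((β * α₁ * α₂ * β) * (β * α₁ * α₂ * β))) := by
    calc α₁ ^ 8 * ((β⁻¹ * α₁ ^ 5)⁻¹ * α₂ * (β⁻¹ * α₁ ^ 5)) *
        ((α₁ ^ 4)⁻¹ * β * α₁ ^ 4) * ((β⁻¹ * α₁)⁻¹ * α₂ * (β⁻¹ * α₁)) * β
        = α₁*α₁*α₁*(β*α₂*β⁻¹)*(α₁*β)*(α₁*(α₁*α₁))*(β*α₂*β⁻¹)*(α₁*β) := by
          simp only [zpow_neg, zpow_one, ← mul_assoc, inv_inv, mul_inv_rev, pow_succ,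
            pow_zero, one_mul]
          group
    _ = α₁*α₁*α₁*(α₂⁻¹*β*α₂)*(α₁*β)*(α₁*(α₁*α₁))*(α₂⁻¹*β*α₂)*(α₁*β) := by rw [h1']
    _ = α₁*α₁*α₁*α₂⁻¹*(β*(α₂*α₁)*β)*(α₁*(α₁*α₁))*(α₂⁻¹*(β*(α₂*α₁)*β)) := by group
    _ = α₁*α₁*α₁*α₂⁻¹*(β*(α₁*α₂)*β)*(α₁*(α₁*α₁))*(α₂⁻¹*(β*(α₁*α₂)*β)) := by
          rw [← hcomm]
    _ = α₁*α₁*α₁*α₂⁻¹*((β*α₁*α₂*β)*α₁)*(α₁*α₁)*(α₂⁻¹*(β*α₁*α₂*β)) := by group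
    _ = α₁*α₁*α₁*α₂⁻¹*(α₂*(β*α₁*α₂*β))*(α₁*α₁)*(α₂⁻¹*(β*α₁*α₂*β)) := by rw [hLx]
    _ = α₁*α₁*α₁*((β*α₁*α₂*β)*α₁)*(α₁*(α₂⁻¹*(β*α₁*α₂*β))) := by group
    _ = α₁*α₁*α₁*(α₂*(β*α₁*α₂*β))*(α₁*(α₂⁻¹*(β*α₁*α₂*β))) := by rw [hLx]
    _ = α₁*α₁*α₁*α₂*((β*α₁*α₂*β)*α₁)*(α₂⁻¹*(β*α₁*α₂*β)) := by group
    _ = α₁*α₁*α₁*α₂*(α₂*(β*α₁*α₂*β))*(α₂⁻¹*(β*α₁*α₂*β)) := by rw [hLx]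
    _ = α₁*α₁*α₁*α₂*α₂*((β*α₁*α₂*β)*α₂⁻¹)*(β*α₁*α₂*β) := by group
    _ = α₁*α₁*α₁*α₂*α₂*(α₁⁻¹*(β*α₁*α₂*β))*(β*α₁*α₂*β) := by rw [hLyinv]
    _ = α₁*α₁*α₁*α₂*(α₂*α₁⁻¹)*((β*α₁*α₂*β)*(β*α₁*α₂*β)) := by group
    _ = α₁*α₁*α₁*α₂*(α₁⁻¹*α₂)*((β*α₁*α₂*β)*(β*α₁*α₂*β)) := by rw [hcomm']
    _ = α₁*α₁*α₁*(α₂*α₁⁻¹)*(α₂*((β*α₁*α₂*β)*(β*α₁*α₂*β))) := by group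
    _ = α₁*α₁*α₁*(α₁⁻¹*α₂)*(α₂*((β*α₁*α₂*β)*(β*α₁*α₂*β))) := by rw [hcomm']
    _ = α₁ * α₁ * α₂ * (α₂ * ((β * α₁ * α₂ * β) * (β * α₁ * α₂ * β))) := by group
  calc δ₁ * δ₂ = (α₁ * α₂ * β) ^ 4 := h
  _ = α₁ * α₁ * α₂ * ((β * α₁ * α₁ * β) * α₂ * (β * α₁ * α₁ * β)) := hA
  _ = α₁ * α₁ * α₂ * (α₂ * ((β * α₁ * α₂ * β) * (β * α₁ * α₂ * β))) := by rw [hB]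
  _ = α₁ ^ 8 * ((β⁻¹ * α₁ ^ 5)⁻¹ * α₂ * (β⁻¹ * α₁ ^ 5)) *
        ((α₁ ^ 4)⁻¹ * β * α₁ ^ 4) * ((β⁻¹ * α₁)⁻¹ * α₂ * (β⁻¹ * α₁)) * β := hD.symm
end

section
/- In a group with elements α₁, α₂, β satisfying α₁α₂ = α₂α₁ and the braid relations α₁βα₁ = βα₁β, α₂βα₂ = βα₂β, and with δ₁, δ₂ commuting with α₁, α₂, β: if δ₁δ₂ = (α₁α₂β)^4 then δ₁δ₂ = α₁^6 · α₂^3 · β^{α₁^4α₂^2} · β^{α₁^2α₂} · β, where x^y = y⁻¹xy. -/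
/-- In a group with α₁α₂ = α₂α₁, braid relations α₁βα₁ = βα₁β, α₂βα₂ = βα₂β,
and δ₁, δ₂ commuting with α₁, α₂, β: if δ₁δ₂ = (α₁α₂β)^4 then
δ₁δ₂ = α₁^6 · α₂^3 · β^{α₁^4α₂^2} · β^{α₁^2α₂} · β, where x^y = y⁻¹xy. -/
theorem stmt4 (G : Type*) [Group G] (α₁ α₂ β δ₁ δ₂ : G)
    (hcomm : α₁ * α₂ = α₂ * α₁)
    (hδ₁α₁ : δ₁ * α₁ = α₁ * δ₁) (hδ₁α₂ : δ₁ * α₂ = α₂ * δ₁) (hδ₁β : δ₁ * β = β * δ₁)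
    (hδ₂α₁ : δ₂ * α₁ = α₁ * δ₂) (hδ₂α₂ : δ₂ * α₂ = α₂ * δ₂) (hδ₂β : δ₂ * β = β * δ₂)
    (hbr₁ : α₁ * β * α₁ = β * α₁ * β) (hbr₂ : α₂ * β * α₂ = β * α₂ * β)
    (h : δ₁ * δ₂ = (α₁ * α₂ * β) ^ 4) :
    δ₁ * δ₂ =
      α₁ ^ 6 * α₂ ^ 3 * ((α₁ ^ 4 * α₂ ^ 2)⁻¹ * β * (α₁ ^ 4 * α₂ ^ 2)) *
        ((α₁ ^ 2 * α₂)⁻¹ * β * (α₁ ^ 2 * α₂)) * β := by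
  have Hc : Commute α₁ α₂ := hcomm
  have Hac : ∀ x : G, α₁ * (α₂ * x) = α₂ * (α₁ * x) := fun x => by
    rw [← mul_assoc, hcomm, mul_assoc]
  have Hca : ∀ x : G, α₂ * (α₁ * x) = α₁ * (α₂ * x) := fun x => (Hac x).symm
  have Hbab : ∀ x : G, β * (α₁ * (β * x)) = α₁ * (β * (α₁ * x)) := fun x => by
    rw [← mul_assoc, ← mul_assoc, ← hbr₁, mul_assoc, mul_assoc]
  have Hcbc : ∀ x : G, α₂ * (β * (α₂ * x)) = β * (α₂ * (β * x)) := fun x => by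
    rw [← mul_assoc, ← mul_assoc, hbr₂, mul_assoc, mul_assoc]
  have key : α₁ * (α₂ * (β * (α₁ * (α₂ * (β * (α₁ * (α₂ * (β * (α₁ * (α₂ * β))))))))))
      = α₁ * (α₁ * (α₂ * (β * (α₁ * (α₁ * (α₂ * (β * (α₁ * (α₁ * (α₂ * β)))))))))) := by
    calc α₁ * (α₂ * (β * (α₁ * (α₂ * (β * (α₁ * (α₂ * (β * (α₁ * (α₂ * β))))))))))
      _ = α₁ * (α₂ * (β * (α₁ * (α₂ * (β * (α₂ * (α₁ * (β * (α₁ * (α₂ * β)))))))))) := by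
          nth_rewrite 3 [Hac]; rfl
      _ = α₁ * (α₂ * (β * (α₁ * (β * (α₂ * (β * (α₁ * (β * (α₁ * (α₂ * β)))))))))) := by
          nth_rewrite 1 [Hcbc]; rfl
      _ = α₁ * (α₂ * (α₁ * (β * (α₁ * (α₂ * (β * (α₁ * (β * (α₁ * (α₂ * β)))))))))) := by
          nth_rewrite 1 [Hbab]; rfl
      _ = α₁ * (α₁ * (α₂ * (β * (α₁ * (α₂ * (β * (α₁ * (β * (α₁ * (α₂ * β)))))))))) := by
          nth_rewrite 1 [Hca]; rfl
      _ = α₁ * (α₁ * (α₂ * (β * (α₁ * (α₂ * (α₁ * (β * (α₁ * (α₁ * (α₂ * β)))))))))) := by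
          nth_rewrite 1 [Hbab]; rfl
      _ = α₁ * (α₁ * (α₂ * (β * (α₁ * (α₁ * (α₂ * (β * (α₁ * (α₁ * (α₂ * β)))))))))) := by
          nth_rewrite 1 [Hca]; rfl
  have h1 : α₁ ^ 6 * α₂ ^ 3 * (α₁ ^ 4 * α₂ ^ 2)⁻¹ = α₁ ^ 2 * α₂ := by
    calc α₁ ^ 6 * α₂ ^ 3 * (α₁ ^ 4 * α₂ ^ 2)⁻¹
        = α₁ ^ 6 * (α₂ ^ 3 * (α₂ ^ 2)⁻¹) * (α₁ ^ 4)⁻¹ := by group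
      _ = α₁ ^ 6 * α₂ * (α₁ ^ 4)⁻¹ := by rw [show α₂ ^ 3 * (α₂ ^ 2)⁻¹ = α₂ from by group]
      _ = α₁ ^ 6 * (α₁ ^ 4)⁻¹ * α₂ := by
          rw [mul_assoc, ((Hc.symm.pow_right 4).inv_right).eq, ← mul_assoc]
      _ = α₁ ^ 2 * α₂ := by rw [show α₁ ^ 6 * (α₁ ^ 4)⁻¹ = α₁ ^ 2 from by group]
  have h2 : α₁ ^ 4 * α₂ ^ 2 * (α₁ ^ 2 * α₂)⁻¹ = α₁ ^ 2 * α₂ := by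
    calc α₁ ^ 4 * α₂ ^ 2 * (α₁ ^ 2 * α₂)⁻¹
        = α₁ ^ 4 * (α₂ ^ 2 * α₂⁻¹) * (α₁ ^ 2)⁻¹ := by group
      _ = α₁ ^ 4 * α₂ * (α₁ ^ 2)⁻¹ := by rw [show α₂ ^ 2 * α₂⁻¹ = α₂ from by group]
      _ = α₁ ^ 4 * (α₁ ^ 2)⁻¹ * α₂ := by
          rw [mul_assoc, ((Hc.symm.pow_right 2).inv_right).eq, ← mul_assoc]
      _ = α₁ ^ 2 * α₂ := by rw [show α₁ ^ 4 * (α₁ ^ 2)⁻¹ = α₁ ^ 2 from by group]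
  rw [h]
  calc (α₁ * α₂ * β) ^ 4
      = α₁ * (α₂ * (β * (α₁ * (α₂ * (β * (α₁ * (α₂ * (β * (α₁ * (α₂ * β)))))))))) := by
        simp only [pow_succ, pow_zero, one_mul, mul_assoc]
    _ = α₁ * (α₁ * (α₂ * (β * (α₁ * (α₁ * (α₂ * (β * (α₁ * (α₁ * (α₂ * β)))))))))) := key
    _ = (α₁ ^ 2 * α₂) * β * (α₁ ^ 2 * α₂) * β * (α₁ ^ 2 * α₂) * β := by
        simp only [pow_two, mul_assoc]
    _ = (α₁ ^ 6 * α₂ ^ 3 * (α₁ ^ 4 * α₂ ^ 2)⁻¹) * β * (α₁ ^ 4 * α₂ ^ 2 * (α₁ ^ 2 * α₂)⁻¹) *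
          β * (α₁ ^ 2 * α₂) * β := by rw [h1, h2]
    _ = α₁ ^ 6 * α₂ ^ 3 * ((α₁ ^ 4 * α₂ ^ 2)⁻¹ * β * (α₁ ^ 4 * α₂ ^ 2)) *
          ((α₁ ^ 2 * α₂)⁻¹ * β * (α₁ ^ 2 * α₂)) * β := by
        simp only [mul_assoc, mul_inv_rev]
end
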